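/- Let E be a perfect group and let Z be a subgroup of E contained in the center of E. If the quotient E/Z has no nontrivial finite quotients, then E has no nontrivial finite quotients. -/
import Mathlib


/-- A subgroup contained in the center is normal. -/
theorem normal_of_le_center {E : Type*} [Group E] (Z : Subgroup E)
    (hZ : Z ≤ Subgroup.center E) : Z.Normal :=
  ⟨fun n hn g => by
    have h := (Subgroup.mem_center_iff.mp (hZ hn)) g
    have : g * n * g⁻¹ = n := by
      rw [h]; group
    rwa [this]⟩

/-- Let `E` be a perfect group and `Z ≤ Z(E)` a central subgroup. If
`E/Z` has no nontrivial finite quotients, then `E` has no nontrivial finite quotients. -/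
theorem stmt_10 {E : Type*} [Group E] (hE : commutator E = ⊤)
    (Z : Subgroup E) (hZ : Z ≤ Subgroup.center E)
    (hquot : letI := normal_of_le_center Z hZ;
      ∀ (F : Type u) [Group F] [Finite F] (φ : E ⧸ Z →* F), φ = 1) :
    ∀ (F : Type v) [Group F] [Finite F] (φ : E →* F), φ = 1 := by
  letI := normal_of_le_center Z hZ
  intro F _ _ φ
  -- restrict to the range
  set φ' : E →* φ.range := φ.rangeRestrict with hφ'
  have hsurj : Function.Surjective φ' := φ.rangeRestrict_surjective
  -- image of Z is central in the range
  set Z' : Subgroup φ.range := Z.map φ' with hZ'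
  have hZ'c : Z' ≤ Subgroup.center φ.range := by
    rintro _ ⟨z, hz, rfl⟩
    rw [Subgroup.mem_center_iff]
    rintro g
    obtain ⟨y, rfl⟩ := hsurj g
    rw [← map_mul, ← map_mul, Subgroup.mem_center_iff.mp (hZ hz) y]
  letI : Z'.Normal := normal_of_le_center Z' hZ'c
  -- the induced map E ⧸ Z → φ.range ⧸ Z'
  have hker : Z ≤ ((QuotientGroup.mk' Z').comp φ').ker := by
    intro z hz
    simp only [MonoidHom.mem_ker, MonoidHom.comp_apply, QuotientGroup.mk'_apply,
      QuotientGroup.eq_one_iff]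
    exact ⟨z, hz, rfl⟩
  set ψ : E ⧸ Z →* φ.range ⧸ Z' := QuotientGroup.lift Z _ hker with hψ
  -- transfer the finite group `φ.range ⧸ Z'` to universe u
  obtain ⟨G', _, _, ⟨e⟩⟩ :=
    Finite.exists_type_univ_nonempty_mulEquiv.{_, u} (φ.range ⧸ Z')
  have hψ1 : e.toMonoidHom.comp ψ = 1 := hquot G' _
  have hψ1' : ψ = 1 := by
    ext x
    have := congrArg (fun f : E ⧸ Z →* G' => e.symm (f x)) hψ1
    simpa using this
  -- hence the range of φ' is contained in Z', so the range is abelian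
  have hrange : ∀ x : E, φ' x ∈ Z' := by
    intro x
    have : ψ (QuotientGroup.mk x) = 1 := by rw [hψ1']; rfl
    have : (QuotientGroup.mk' Z') (φ' x) = 1 := this
    rwa [← QuotientGroup.ker_mk' Z', MonoidHom.mem_ker]
  have hcomm : ∀ x y : E, φ x * φ y = φ y * φ x := by
    intro x y
    have h := Subgroup.mem_center_iff.mp (hZ'c (hrange x)) (φ' y)
    have := congrArg (Subtype.val) h
    simpa [hφ'] using this.symm
  -- since E is perfect, φ is trivial
  have hle : commutator E ≤ φ.ker := by
    rw [commutator, Subgroup.commutator_le]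
    intro g _ h _
    rw [MonoidHom.mem_ker]
    simp only [commutatorElement_def, map_mul, map_inv]
    rw [hcomm g h]
    group
  ext x
  have : x ∈ φ.ker := hle (hE ▸ Subgroup.mem_top x)
  simpa using this
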